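/- arXiv:0801.2895 — 6 statements merged into one kernel-verified Lean document; each statement's English description precedes it below -/
import Mathlib

section
/- Let 0 < a < 1 and 0 < d < a. Then for all real x with 0 < x < 1, d·x³ + (1 − 2a²)·x² − d·(2 − a²)·x + a² > 0. -/
/-- For `0 < a < 1`, `0 < d < a` and `0 < x < 1`:
`d·x³ + (1 − 2a²)·x² − d·(2 − a²)·x + a² > 0`. -/
theorem stmt1 (a d x : ℝ) (ha0 : 0 < a) (ha1 : a < 1) (hd0 : 0 < d) (hda : d < a)
    (hx0 : 0 < x) (hx1 : x < 1) :
    d * x ^ 3 + (1 - 2 * a ^ 2) * x ^ 2 - d * (2 - a ^ 2) * x + a ^ 2 > 0 := by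
  have h1 : (x - a) ^ 2 * (a * x + 1) ≥ 0 := by positivity
  have h2 : (a - d) * (x * (2 - a ^ 2 - x ^ 2)) > 0 := by
    apply mul_pos (by linarith)
    apply mul_pos hx0
    nlinarith
  nlinarith [h1, h2]
end

section
/- Let 0 < a < 1, 0 < d < a, and let D = {z ∈ ℂ² : |z₁| < 1, |z₂| < 1, |z₂|² − a² < 2(1 − a²)|z₁|}. Define φ : 𝔻 → ℂ² by φ(λ) = (λ(λ − d)/(1 − dλ), λ). Then φ maps the open unit disc 𝔻 into D, φ(0) = (0,0), and φ(d) = (0, d). -/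
open Complex

/-!
For real `d ∈ (0, 1)` the factor `(z - d)/(1 - d z)` is a disc automorphism, so the first
coordinate `z (z - d)/(1 - d z)` stays in the disc. On the circle `|z| = t` the modulus of that factor
is smallest at `z = t`, where it equals `(t - d)/(1 - d t)`; the defining inequality of `D` thus reduces
to the one-variable polynomial inequality `sq_sub_sq_mul_one_sub_mul_lt`, whose gap is
`(t - a)² (1 + a t) + (a - d) t (2 - a² - t²)`.
-/

lemma sq_sub_sq_mul_one_sub_mul_lt {a d t : ℝ} (ha0 : 0 < a) (ha1 : a < 1) (hda : d < a) (ht0 : 0 ≤ t)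
    (ht1 : t < 1) : (t ^ 2 - a ^ 2) * (1 - d * t) < 2 * (1 - a ^ 2) * t * (t - d) := by
  have key : 2 * (1 - a ^ 2) * t * (t - d) - (t ^ 2 - a ^ 2) * (1 - d * t)
      = (t - a) ^ 2 * (1 + a * t) + (a - d) * t * (2 - a ^ 2 - t ^ 2) := by ring
  rw [← sub_pos, key]
  rcases ht0.eq_or_lt with rfl | ht
  · simpa using pow_pos ha0 2
  · have : 0 < a - d := sub_pos.2 hda
    have : 0 < 2 - a ^ 2 - t ^ 2 := by nlinarith
    positivity

namespace Complex

variable {z : ℂ} {d : ℝ}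

lemma sq_norm_sub_ofReal (z : ℂ) (d : ℝ) : ‖z - d‖ ^ 2 = ‖z‖ ^ 2 - 2 * d * z.re + d ^ 2 := by
  simp only [Complex.sq_norm, normSq_apply, sub_re, sub_im, ofReal_re, ofReal_im]
  ring

lemma sq_norm_one_sub_ofReal_mul (z : ℂ) (d : ℝ) :
    ‖1 - d * z‖ ^ 2 = 1 - 2 * d * z.re + d ^ 2 * ‖z‖ ^ 2 := by
  simp only [Complex.sq_norm, normSq_apply, sub_re, sub_im, mul_re, mul_im, one_re, one_im,
    ofReal_re, ofReal_im]
  ring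

lemma norm_sub_ofReal_lt_norm_one_sub_ofReal_mul (hz : ‖z‖ < 1) (hd : |d| < 1) :
    ‖z - d‖ < ‖1 - d * z‖ := by
  have hd2 : d ^ 2 < 1 := by simpa using sq_lt_one_iff_abs_lt_one d |>.mpr hd
  have hsq : ‖z - d‖ ^ 2 < ‖1 - d * z‖ ^ 2 := by
    rw [sq_norm_sub_ofReal, sq_norm_one_sub_ofReal_mul]
    -- the gap is `(1 - ‖z‖²)(1 - d²)`
    nlinarith [mul_pos (sub_pos.2 (pow_lt_one₀ (norm_nonneg z) hz two_ne_zero)) (sub_pos.2 hd2)]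
  exact lt_of_pow_lt_pow_left₀ 2 (norm_nonneg _) hsq

lemma div_le_norm_sub_ofReal_div_norm_one_sub_ofReal_mul (hz : ‖z‖ ≤ 1) (hd0 : 0 ≤ d)
    (hd1 : d < 1) : (‖z‖ - d) / (1 - d * ‖z‖) ≤ ‖z - d‖ / ‖1 - d * z‖ := by
  have hdz : 0 < 1 - d * ‖z‖ := by nlinarith [norm_nonneg z]
  have hden : 0 < ‖1 - d * z‖ := by
    calc 0 < 1 - d * ‖z‖ := hdz
      _ = ‖(1 : ℂ)‖ - ‖(d : ℂ) * z‖ := by simp [abs_of_nonneg hd0]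
      _ ≤ ‖1 - d * z‖ := norm_sub_norm_le _ _
  rw [div_le_div_iff₀ hdz hden]
  refine (le_abs_self _).trans (abs_le_of_sq_le_sq ?_ (by positivity))
  rw [mul_pow, mul_pow, sq_norm_sub_ofReal, sq_norm_one_sub_ofReal_mul]
  -- the gap is `2d(1 - ‖z‖²)(1 - d²)(‖z‖ - Re z)`
  nlinarith [mul_nonneg (mul_nonneg (mul_nonneg hd0 (by nlinarith : (0 : ℝ) ≤ 1 - d ^ 2))
    (by nlinarith [norm_nonneg z] : (0 : ℝ) ≤ 1 - ‖z‖ ^ 2)) (sub_nonneg.2 (re_le_norm z))]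

lemma norm_mul_sub_ofReal_div_lt_one (hz : ‖z‖ < 1) (hd : |d| < 1) :
    ‖z * (z - d) / (1 - d * z)‖ < 1 := by
  have hlt := norm_sub_ofReal_lt_norm_one_sub_ofReal_mul hz hd
  rw [norm_div, norm_mul, mul_div_assoc]
  exact mul_lt_one_of_nonneg_of_lt_one_left (norm_nonneg z) hz
    ((div_le_one ((norm_nonneg _).trans_lt hlt)).2 hlt.le)

lemma sq_norm_sub_sq_lt_norm_mul_sub_ofReal_div {a : ℝ} (ha0 : 0 < a) (ha1 : a < 1)
    (hd0 : 0 ≤ d) (hda : d < a) (hz : ‖z‖ < 1) :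
    ‖z‖ ^ 2 - a ^ 2 < 2 * (1 - a ^ 2) * ‖z * (z - d) / (1 - d * z)‖ := by
  have hdz : 0 < 1 - d * ‖z‖ := by nlinarith [norm_nonneg z]
  have hc : 0 ≤ 2 * (1 - a ^ 2) * ‖z‖ := by
    have : 0 < 1 - a ^ 2 := by nlinarith
    positivity
  calc ‖z‖ ^ 2 - a ^ 2 < 2 * (1 - a ^ 2) * ‖z‖ * ((‖z‖ - d) / (1 - d * ‖z‖)) := by
        rw [← mul_div_assoc, lt_div_iff₀ hdz]
        exact sq_sub_sq_mul_one_sub_mul_lt ha0 ha1 hda (norm_nonneg z) hz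
    _ ≤ 2 * (1 - a ^ 2) * ‖z‖ * (‖z - d‖ / ‖1 - d * z‖) :=
        mul_le_mul_of_nonneg_left
          (div_le_norm_sub_ofReal_div_norm_one_sub_ofReal_mul hz.le hd0 (hda.trans ha1)) hc
    _ = 2 * (1 - a ^ 2) * ‖z * (z - d) / (1 - d * z)‖ := by
        rw [norm_div, norm_mul]
        ring

end Complex

/-- Example 5: for `0 < d < a < 1`, the disc `φ(l) = (l(l − d)/(1 − dl), l)` maps
the unit disc into `D = {z ∈ 𝔻² : |z₂|² − a² < 2(1 − a²)|z₁|}`, with `φ(0) = (0,0)`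
and `φ(d) = (0,d)`. -/
theorem stmt3 (a d : ℝ) (ha0 : 0 < a) (ha1 : a < 1) (hd0 : 0 < d) (hda : d < a)
    (D : Set (ℂ × ℂ))
    (hD : D = {z : ℂ × ℂ | ‖z.1‖ < 1 ∧ ‖z.2‖ < 1 ∧
      (‖z.2‖) ^ 2 - a ^ 2 < 2 * (1 - a ^ 2) * ‖z.1‖})
    (φ : ℂ → ℂ × ℂ)
    (hφ : ∀ l : ℂ, φ l = (l * (l - (d : ℂ)) / (1 - (d : ℂ) * l), l)) :
    (∀ l ∈ Metric.ball (0 : ℂ) 1, φ l ∈ D) ∧ φ 0 = (0, 0) ∧ φ d = (0, (d : ℂ)) := by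
  refine ⟨fun l hl ↦ ?_, by simp [hφ], by simp [hφ]⟩
  have hl1 : ‖l‖ < 1 := mem_ball_zero_iff.1 hl
  have hd1 : |d| < 1 := by rw [abs_of_pos hd0]; exact hda.trans ha1
  rw [hφ, hD]
  exact ⟨norm_mul_sub_ofReal_div_lt_one hl1 hd1, hl1,
    sq_norm_sub_sq_lt_norm_mul_sub_ofReal_div ha0 ha1 hd0.le hda hl1⟩
end

section
/- Let t ∈ ℂ with |t| < 1/2 and let r ∈ (|t|, 1). Then there exists α ∈ ℂ with |α| < 1 such that φ(t/r) = t, where φ(λ) = λ(λ − α)/(1 − conj(α)·λ), and the map ψ(λ) = (rλ, φ(λ)) sends the open unit disc into D = 𝔻² \ {(s,s) : 1/2 ≤ |s| < 1}, with ψ(0) = (0,0) and ψ(t/r) = (t, t). -/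
open Complex

private lemma one_sub_ne_zero' {u : ℂ} (h : ‖u‖ < 1) : (1 : ℂ) - u ≠ 0 := by
  intro h0
  have : u = 1 := by linear_combination -h0
  rw [this] at h
  simp at h

private lemma blaschke_lt {a z : ℂ} (ha : ‖a‖ < 1) (hz : ‖z‖ < 1) :
    ‖(z - a)‖ < ‖(1 - (starRingEnd ℂ) a * z)‖ := by
  have hid : Complex.normSq (1 - (starRingEnd ℂ) a * z) - Complex.normSq (z - a)
      = (1 - Complex.normSq a) * (1 - Complex.normSq z) := by
    simp [Complex.normSq_apply, Complex.sub_re, Complex.sub_im, Complex.mul_re,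
      Complex.mul_im, Complex.one_re, Complex.one_im]
    ring
  have h1 : Complex.normSq a < 1 := by
    have := Complex.sq_norm a; nlinarith [norm_nonneg a]
  have h2 : Complex.normSq z < 1 := by
    have := Complex.sq_norm z; nlinarith [norm_nonneg z]
  have h3 : Complex.normSq (z - a) < Complex.normSq (1 - (starRingEnd ℂ) a * z) := by
    nlinarith
  have e1 := Complex.sq_norm (z - a)
  have e2 := Complex.sq_norm (1 - (starRingEnd ℂ) a * z)
  nlinarith [norm_nonneg (z - a), norm_nonneg (1 - (starRingEnd ℂ) a * z)]

/-- Example 4: for `t ∈ ℂ` with `|t| < 1/2` and `r ∈ (|t|, 1)`, there exists `α` with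
`|α| < 1` such that, setting `φ(l) = l(l − α)/(1 − conj(α)l)` and `ψ(l) = (rl, φ(l))`,
one has `φ(t/r) = t`, `ψ` maps the unit disc into
`D = 𝔻² \ {(s,s) : 1/2 ≤ |s| < 1}`, `ψ(0) = (0,0)` and `ψ(t/r) = (t,t)`. -/
theorem stmt7 (t : ℂ) (ht : ‖t‖ < 1 / 2) (r : ℝ)
    (hr1 : ‖t‖ < r) (hr2 : r < 1)
    (D : Set (ℂ × ℂ))
    (hD : D = {z : ℂ × ℂ | ‖z.1‖ < 1 ∧ ‖z.2‖ < 1} \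
      {z : ℂ × ℂ | ∃ s : ℂ, z = (s, s) ∧ 1 / 2 ≤ ‖s‖ ∧ ‖s‖ < 1}) :
    ∃ α : ℂ, ‖α‖ < 1 ∧
      ∀ (φ : ℂ → ℂ) (ψ : ℂ → ℂ × ℂ),
      (∀ l : ℂ, φ l = l * (l - α) / (1 - (starRingEnd ℂ) α * l)) →
      (∀ l : ℂ, ψ l = ((r : ℂ) * l, φ l)) →
      φ (t / (r : ℂ)) = t ∧
      (∀ l ∈ Metric.ball (0 : ℂ) 1, ψ l ∈ D) ∧
      ψ 0 = (0, 0) ∧ ψ (t / (r : ℂ)) = (t, t) := by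
  have htnn : (0:ℝ) ≤ ‖t‖ := norm_nonneg t
  have hr0 : (0:ℝ) < r := lt_of_le_of_lt htnn hr1
  have hrC : (r:ℂ) ≠ 0 := by exact_mod_cast hr0.ne'
  have hnt : Complex.normSq t < 1 := by
    have := Complex.sq_norm t; nlinarith [norm_nonneg t]
  have hdenR : (1:ℝ) - Complex.normSq t ≠ 0 := by nlinarith
  have hden : (1 : ℂ) - (Complex.normSq t : ℂ) ≠ 0 := by
    intro h
    apply hdenR
    have : ((1 - Complex.normSq t : ℝ) : ℂ) = 0 := by push_cast; linear_combination h
    exact_mod_cast this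
  set b : ℂ := t / r - r with hb
  obtain ⟨α, hα⟩ : ∃ a : ℂ, a = (b + t * (starRingEnd ℂ) b) / (1 - (Complex.normSq t : ℂ)) :=
    ⟨_, rfl⟩
  have hkey : α - t * (starRingEnd ℂ) α = b := by
    have hc : (starRingEnd ℂ) α
        = ((starRingEnd ℂ) b + (starRingEnd ℂ) t * b) / (1 - (Complex.normSq t : ℂ)) := by
      rw [hα]
      simp only [map_div₀, map_sub, map_add, map_mul, Complex.conj_conj, map_one,
        Complex.conj_ofReal]
    rw [hc, hα]
    have hns : (Complex.normSq t : ℂ) = (starRingEnd ℂ) t * t :=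
      Complex.normSq_eq_conj_mul_self
    field_simp
    rw [hns]
    ring
  have key2 : α + (r:ℂ) = (t / r) * (1 + (r:ℂ) * (starRingEnd ℂ) α) := by
    have h := hkey
    rw [hb] at h
    field_simp at h ⊢
    linear_combination h
  -- |α| < 1
  have hαlt : ‖α‖ < 1 := by
    have hid : Complex.normSq (1 + (r:ℂ) * (starRingEnd ℂ) α) - Complex.normSq (α + r)
        = (1 - r^2) * (1 - Complex.normSq α) := by
      simp [Complex.normSq_apply, Complex.add_re, Complex.add_im, Complex.mul_re,
        Complex.mul_im, Complex.one_re, Complex.one_im, Complex.ofReal_re, Complex.ofReal_im]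
      ring
    have h1 : Complex.normSq (α + r)
        = Complex.normSq (t / r) * Complex.normSq (1 + (r:ℂ) * (starRingEnd ℂ) α) := by
      rw [key2, Complex.normSq_mul]
    have hlam0 : Complex.normSq (t / r) < 1 := by
      have habs : ‖(t / r)‖ < 1 := by
        rw [norm_div, Complex.norm_real, Real.norm_of_nonneg hr0.le]
        rw [div_lt_one hr0]; exact hr1
      have := Complex.sq_norm (t / r)
      nlinarith [norm_nonneg (t / r)]
    have hpos : 0 < Complex.normSq (1 + (r:ℂ) * (starRingEnd ℂ) α) := by
      rcases lt_or_eq_of_le (Complex.normSq_nonneg (1 + (r:ℂ) * (starRingEnd ℂ) α)) with h | h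
      · exact h
      · exfalso
        have hz : (1 + (r:ℂ) * (starRingEnd ℂ) α) = 0 := by
          have := Complex.normSq_eq_zero.mp h.symm
          exact this
        have hz2 : Complex.normSq (α + r) = 0 := by rw [h1, ← h]; ring
        have hz3 : α = -(r:ℂ) := by
          have := Complex.normSq_eq_zero.mp hz2
          linear_combination this
        rw [hz3] at hz
        simp only [map_neg, Complex.conj_ofReal] at hz
        have : ((1 - r*r : ℝ) : ℂ) = 0 := by push_cast; linear_combination hz
        have : (1:ℝ) - r*r = 0 := by exact_mod_cast this
        nlinarith
    have hlt : Complex.normSq (α + r) < Complex.normSq (1 + (r:ℂ) * (starRingEnd ℂ) α) := by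
      calc Complex.normSq (α + r)
          = Complex.normSq (t / r) * Complex.normSq (1 + (r:ℂ) * (starRingEnd ℂ) α) := h1
        _ < 1 * Complex.normSq (1 + (r:ℂ) * (starRingEnd ℂ) α) := by
            exact mul_lt_mul_of_pos_right hlam0 hpos
        _ = _ := one_mul _
    have hr2' : (0:ℝ) < 1 - r^2 := by nlinarith
    have hprod : 0 < (1 - r^2) * (1 - Complex.normSq α) := by linarith
    have hns : Complex.normSq α < 1 := by
      rcases mul_pos_iff.mp hprod with ⟨_, h⟩ | ⟨h, _⟩
      · linarith
      · linarith
    have := Complex.sq_norm α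
    nlinarith [norm_nonneg α]
  refine ⟨α, hαlt, ?_⟩
  intro φ ψ hφ hψ
  -- denominator nonzero helper
  have hd : ∀ l : ℂ, ‖l‖ < 1 → (1 : ℂ) - (starRingEnd ℂ) α * l ≠ 0 := by
    intro l hl
    apply one_sub_ne_zero'
    rw [norm_mul, Complex.norm_conj]
    calc ‖α‖ * ‖l‖ ≤ 1 * ‖l‖ := by
          exact mul_le_mul_of_nonneg_right hαlt.le (norm_nonneg l)
      _ = ‖l‖ := one_mul _
      _ < 1 := hl
  have hlam0abs : ‖(t / r)‖ < 1 := by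
    rw [norm_div, Complex.norm_real, Real.norm_of_nonneg hr0.le, div_lt_one hr0]; exact hr1
  have hblas : t / r - α = (r:ℂ) * (1 - (starRingEnd ℂ) α * (t / r)) := by
    have h := hkey
    rw [hb] at h
    field_simp at h ⊢
    linear_combination -h
  have hφt : φ (t / (r:ℂ)) = t := by
    have hdd := hd _ hlam0abs
    have hdd2 : (r:ℂ) - t * (starRingEnd ℂ) α ≠ 0 := by
      intro h
      apply hdd
      have h2 : (starRingEnd ℂ) α * (t / r) = 1 := by
        field_simp
        linear_combination -h
      rw [h2, sub_self]
    rw [hφ, hblas, mul_div_assoc, mul_div_assoc, div_self hdd, mul_one,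
      div_mul_cancel₀ _ hrC]
  refine ⟨hφt, ?_, ?_, ?_⟩
  · intro l hl
    have hl1 : ‖l‖ < 1 := by
      rw [Metric.mem_ball, Complex.dist_eq, sub_zero] at hl; exact hl
    rw [hD, hψ]
    constructor
    · constructor
      · show ‖((r:ℂ) * l)‖ < 1
        rw [norm_mul, Complex.norm_real, Real.norm_of_nonneg hr0.le]
        nlinarith [norm_nonneg l]
      · show ‖(φ l)‖ < 1
        rw [hφ, norm_div, norm_mul]
        rw [div_lt_one (by
          have := hd l hl1
          exact (norm_pos_iff.mpr (hd l hl1)))]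
        calc ‖l‖ * ‖(l - α)‖
            ≤ 1 * ‖(l - α)‖ := by
              exact mul_le_mul_of_nonneg_right hl1.le (norm_nonneg _)
          _ = ‖(l - α)‖ := one_mul _
          _ < _ := blaschke_lt hαlt hl1
    · rintro ⟨s, hs, hs1, hs2⟩
      have h1 : (r:ℂ) * l = s := congrArg Prod.fst hs
      have h2 : φ l = s := congrArg Prod.snd hs
      have hl0 : l ≠ 0 := by
        intro h
        rw [h, mul_zero] at h1
        rw [← h1] at hs1
        simp at hs1
        linarith
      have heq : (r:ℂ) * l * (1 - (starRingEnd ℂ) α * l) = l * (l - α) := by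
        have h3 : φ l = l * (l - α) / (1 - (starRingEnd ℂ) α * l) := hφ l
        rw [h2, ← h1] at h3
        rw [eq_div_iff (hd l hl1)] at h3
        linear_combination h3
      have hcancel : (r:ℂ) * (1 - (starRingEnd ℂ) α * l) = l - α :=
        mul_left_cancel₀ hl0 (by linear_combination heq)
      have heq2 : l * (1 + (r:ℂ) * (starRingEnd ℂ) α) = α + (r:ℂ) := by
        linear_combination -hcancel
      have hne : (1 + (r:ℂ) * (starRingEnd ℂ) α) ≠ 0 := by
        intro h
        have : (1 : ℂ) - -((r:ℂ) * (starRingEnd ℂ) α) = 0 := by linear_combination h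
        apply one_sub_ne_zero' (u := -((r:ℂ) * (starRingEnd ℂ) α)) ?_ this
        rw [norm_neg, norm_mul, Complex.norm_real, Real.norm_of_nonneg hr0.le,
          Complex.norm_conj]
        nlinarith [norm_nonneg α]
      have hlval : l = t / r := by
        have : l * (1 + (r:ℂ) * (starRingEnd ℂ) α)
            = (t / r) * (1 + (r:ℂ) * (starRingEnd ℂ) α) := by
          rw [heq2, key2]
        exact mul_right_cancel₀ hne this
      have hst : s = t := by
        rw [← h1, hlval]
        field_simp
      rw [hst] at hs1
      linarith
  · rw [hψ, hφ]
    simp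
  · rw [hψ, hφt]
    have : (r:ℂ) * (t / r) = t := by field_simp
    rw [this]
end

section
/- Let b ∈ ℂ with 0 < |b| < 4/5, let ψ_b(λ) = (λ − b)/(1 − conj(b)·λ), and define D_b = 𝔻² \ {(ψ_b(λ), λ) : 1/2 ≤ |λ| < 1}. Then the map φ(λ) = (λ, −λ) maps the open unit disc 𝔻 into D_b. -/
/-!
If `ψ_b(μ) = -μ`, clearing the denominator gives `2μ - b = conj(b) μ²`, so
`2|μ| ≤ |b| (1 + |μ|²)`. On `1/2 ≤ |μ| ≤ 2` the function `2t / (1 + t²)` is at least `4/5`,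
which forces `|b| ≥ 4/5`.
-/

open Complex

lemma one_sub_conj_mul_ne_zero {b z : ℂ} (hb : ‖b‖ ≤ 1) (hz : ‖z‖ < 1) :
    1 - starRingEnd ℂ b * z ≠ 0 := by
  have hlt : ‖starRingEnd ℂ b * z‖ < 1 := by
    rw [norm_mul, Complex.norm_conj]
    nlinarith [norm_nonneg b, norm_nonneg z]
  intro h
  rw [← sub_eq_zero.mp h, norm_one] at hlt
  exact lt_irrefl 1 hlt

lemma two_mul_norm_le_of_moebius_eq_neg {b μ : ℂ} (hb : ‖b‖ ≤ 1) (hμ : ‖μ‖ < 1)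
    (h : (μ - b) / (1 - starRingEnd ℂ b * μ) = -μ) :
    2 * ‖μ‖ ≤ ‖b‖ * (1 + ‖μ‖ ^ 2) := by
  rw [div_eq_iff (one_sub_conj_mul_ne_zero hb hμ)] at h
  have hfix : 2 * μ = b + starRingEnd ℂ b * μ ^ 2 := by linear_combination h
  calc 2 * ‖μ‖ = ‖b + starRingEnd ℂ b * μ ^ 2‖ := by
        rw [← hfix, norm_mul, Complex.norm_two]
    _ ≤ ‖b‖ + ‖starRingEnd ℂ b * μ ^ 2‖ := norm_add_le _ _
    _ = ‖b‖ * (1 + ‖μ‖ ^ 2) := by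
        rw [norm_mul, norm_pow, Complex.norm_conj]
        ring

lemma four_fifths_le_of_two_mul_le {r t : ℝ} (ht₁ : 1 / 2 ≤ t) (ht₂ : t ≤ 2)
    (h : 2 * t ≤ r * (1 + t ^ 2)) : 4 / 5 ≤ r := by
  have hfactor : (2 * t - 1) * (t - 2) ≤ 0 :=
    mul_nonpos_of_nonneg_of_nonpos (by linarith) (by linarith)
  have hquad : 4 / 5 * (1 + t ^ 2) ≤ 2 * t := by linear_combination 2 / 5 * hfactor
  exact le_of_mul_le_mul_right (hquad.trans h) (by positivity)

lemma moebius_ne_neg {b μ : ℂ} (hb : ‖b‖ < 4 / 5) (hμ₁ : 1 / 2 ≤ ‖μ‖) (hμ₂ : ‖μ‖ < 1) :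
    (μ - b) / (1 - starRingEnd ℂ b * μ) ≠ -μ := fun h =>
  hb.not_ge <| four_fifths_le_of_two_mul_le hμ₁ (by linarith)
    (two_mul_norm_le_of_moebius_eq_neg (by linarith) hμ₂ h)

theorem stmt8_general (b : ℂ) (hb : ‖b‖ < 4 / 5)
    (ψb : ℂ → ℂ) (hψb : ∀ l : ℂ, ψb l = (l - b) / (1 - (starRingEnd ℂ) b * l))
    (Db : Set (ℂ × ℂ))
    (hDb : Db = {z : ℂ × ℂ | ‖z.1‖ < 1 ∧ ‖z.2‖ < 1} \
      {z : ℂ × ℂ | ∃ l : ℂ, z = (ψb l, l) ∧ 1 / 2 ≤ ‖l‖ ∧ ‖l‖ < 1})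
    (φ : ℂ → ℂ × ℂ) (hφ : ∀ l : ℂ, φ l = (l, -l)) :
    ∀ l ∈ Metric.ball (0 : ℂ) 1, φ l ∈ Db := by
  intro l hl
  rw [mem_ball_zero_iff] at hl
  rw [hDb, hφ]
  refine ⟨⟨hl, by rwa [norm_neg]⟩, ?_⟩
  rintro ⟨μ, heq, hμ₁, hμ₂⟩
  obtain ⟨hl, rfl⟩ := Prod.mk.inj heq
  rw [hψb] at hl
  exact moebius_ne_neg hb hμ₁ hμ₂ (by rw [← hl, neg_neg])

/-- Remark after Example 4: for `0 < |b| < 4/5`, with `ψ_b(l) = (l − b)/(1 − conj(b)l)` and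
`D_b = 𝔻² \ {(ψ_b(l), l) : 1/2 ≤ |l| < 1}`, the map `φ(l) = (l, −l)` sends the
unit disc into `D_b`. -/
theorem stmt8 (b : ℂ) (hb0 : 0 < ‖b‖) (hb : ‖b‖ < 4 / 5)
    (ψb : ℂ → ℂ) (hψb : ∀ l : ℂ, ψb l = (l - b) / (1 - (starRingEnd ℂ) b * l))
    (Db : Set (ℂ × ℂ))
    (hDb : Db = {z : ℂ × ℂ | ‖z.1‖ < 1 ∧ ‖z.2‖ < 1} \
      {z : ℂ × ℂ | ∃ l : ℂ, z = (ψb l, l) ∧ 1 / 2 ≤ ‖l‖ ∧ ‖l‖ < 1})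
    (φ : ℂ → ℂ × ℂ) (hφ : ∀ l : ℂ, φ l = (l, -l)) :
    ∀ l ∈ Metric.ball (0 : ℂ) 1, φ l ∈ Db :=
  stmt8_general b hb ψb hψb Db hDb φ hφ
end

section
/- Let D = {z ∈ ℂ² : |z₁| < 1, |z₁³⁴·z₂⁵⁵| < 1}. The convex hull of D is 𝔻 × ℂ, and hence the Minkowski function of the convex hull is ĥ_D(z) = |z₁|. -/
/-- The Minkowski function of a set `D ⊂ ℂ²`: `h_D(z) = inf {t > 0 : z/t ∈ D}`. -/
noncomputable def mink (D : Set (ℂ × ℂ)) (z : ℂ × ℂ) : ℝ :=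
  sInf {t : ℝ | 0 < t ∧ t⁻¹ • z ∈ D}

/-!
`D` contains `𝔻 × {0}` and `{0} × ℂ`. A point `(x, y)` with `‖x‖ < a < 1` is the convex
combination `a • (x / a, 0) + (1 - a) • (0, y / (1 - a))` of points of these two sets, so
the convex hull of `D` is the convex set `𝔻 × ℂ`. This is the unit ball of the seminorm
`(x, y) ↦ ‖x‖`, so its Minkowski function is that seminorm.
-/

section NormFstLtOne

variable {E F : Type*} [SeminormedAddCommGroup E] [NormedSpace ℝ E] [AddCommGroup F] [Module ℝ F]

theorem setOf_norm_fst_lt_one_eq_ball :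
    {z : E × F | ‖z.1‖ < 1} = ((normSeminorm ℝ E).comp (LinearMap.fst ℝ E F)).ball 0 1 := by
  ext z
  simp [Seminorm.mem_ball]

theorem convex_setOf_norm_fst_lt_one : Convex ℝ {z : E × F | ‖z.1‖ < 1} := by
  rw [setOf_norm_fst_lt_one_eq_ball]
  exact Seminorm.convex_ball _ _ _

theorem gauge_setOf_norm_fst_lt_one (z : E × F) : gauge {z : E × F | ‖z.1‖ < 1} z = ‖z.1‖ := by
  rw [setOf_norm_fst_lt_one_eq_ball, Seminorm.gauge_ball]
  rfl

theorem setOf_norm_fst_lt_one_subset_convexHull {D : Set (E × F)}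
    (h_fst : ∀ x : E, ‖x‖ < 1 → (x, 0) ∈ D) (h_snd : ∀ y : F, (0, y) ∈ D) :
    {z : E × F | ‖z.1‖ < 1} ⊆ convexHull ℝ D := by
  rintro ⟨x, y⟩ (hx : ‖x‖ < 1)
  obtain ⟨a, hxa, ha1⟩ := exists_between hx
  have ha : 0 < a := (norm_nonneg x).trans_lt hxa
  have h1a : 0 < 1 - a := sub_pos.2 ha1
  have hx' : ‖a⁻¹ • x‖ < 1 := by
    rw [norm_smul, Real.norm_of_nonneg (inv_nonneg.2 ha.le), inv_mul_lt_iff₀ ha, mul_one]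
    exact hxa
  refine segment_subset_convexHull (h_fst _ hx') (h_snd ((1 - a)⁻¹ • y))
    ⟨a, 1 - a, ha.le, h1a.le, by ring, ?_⟩
  simp [smul_smul, ha.ne', h1a.ne']

theorem convexHull_eq_setOf_norm_fst_lt_one {D : Set (E × F)} (hD : D ⊆ {z | ‖z.1‖ < 1})
    (h_fst : ∀ x : E, ‖x‖ < 1 → (x, 0) ∈ D) (h_snd : ∀ y : F, (0, y) ∈ D) :
    convexHull ℝ D = {z | ‖z.1‖ < 1} :=
  (convexHull_min hD convex_setOf_norm_fst_lt_one).antisymm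
    (setOf_norm_fst_lt_one_subset_convexHull h_fst h_snd)

end NormFstLtOne

theorem mink_eq_gauge (D : Set (ℂ × ℂ)) (z : ℂ × ℂ) : mink D z = gauge D z :=
  gauge_def'.symm

/-- Example 7: for `D = {z ∈ ℂ² : |z₁| < 1, |z₁³⁴z₂⁵⁵| < 1}`, the convex hull of `D`
is `𝔻 × ℂ`, and the Minkowski function of the convex hull is `z ↦ |z₁|`. -/
theorem stmt14 (D : Set (ℂ × ℂ))
    (hD : D = {z : ℂ × ℂ | ‖z.1‖ < 1 ∧ ‖z.1 ^ 34 * z.2 ^ 55‖ < 1}) :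
    convexHull ℝ D = {z : ℂ × ℂ | ‖z.1‖ < 1} ∧
    ∀ z : ℂ × ℂ, mink (convexHull ℝ D) z = ‖z.1‖ := by
  subst hD
  have hull : convexHull ℝ {z : ℂ × ℂ | ‖z.1‖ < 1 ∧ ‖z.1 ^ 34 * z.2 ^ 55‖ < 1} =
      {z : ℂ × ℂ | ‖z.1‖ < 1} :=
    convexHull_eq_setOf_norm_fst_lt_one (fun _ hz ↦ hz.1) (fun _ hx ↦ ⟨hx, by simp⟩)
      (fun _ ↦ ⟨by simp, by simp⟩)
  exact ⟨hull, fun z ↦ by rw [hull, mink_eq_gauge, gauge_setOf_norm_fst_lt_one]⟩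
end

section
/- Let D = {z ∈ 𝔻² : |z₂|² − a² < 2(1 − a²)|z₁|} for 0 < a < 1. Then D is a balanced domain: it is open, contains 0, and λz ∈ D whenever z ∈ D and |λ| ≤ 1. Moreover h_D((0,d)) = |d|/a for all d ∈ ℂ. -/
open Set

lemma sq_mul_sub_sq_lt_mul {a c r x y : ℝ} (ha : 0 < a) (hr0 : 0 ≤ r) (hr1 : r ≤ 1)
    (h : x ^ 2 - a ^ 2 < c * y) : (r * x) ^ 2 - a ^ 2 < c * (r * y) := by
  rcases hr0.eq_or_lt with rfl | hr
  · nlinarith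
  · have hshrink : (r * x) ^ 2 - a ^ 2 ≤ r * (x ^ 2 - a ^ 2) := by
      nlinarith [mul_nonneg (mul_nonneg hr0 (sq_nonneg x)) (sub_nonneg.2 hr1)]
    calc (r * x) ^ 2 - a ^ 2 ≤ r * (x ^ 2 - a ^ 2) := hshrink
      _ < r * (c * y) := mul_lt_mul_of_pos_left h hr
      _ = c * (r * y) := by ring

lemma setOf_pos_and_div_lt_eq_Ioi {s a : ℝ} (hs : 0 ≤ s) (ha : 0 < a) :
    {t : ℝ | 0 < t ∧ s / t < a} = Ioi (s / a) := by
  ext t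
  simp only [mem_ofPred_eq, mem_Ioi]
  constructor
  · rintro ⟨ht, hlt⟩
    rw [div_lt_iff₀ ha, mul_comm]
    rwa [div_lt_iff₀ ht] at hlt
  · intro ht
    have ht0 : 0 < t := (div_nonneg hs ha.le).trans_lt ht
    refine ⟨ht0, ?_⟩
    rw [div_lt_iff₀ ht0, mul_comm]
    rwa [div_lt_iff₀ ha] at ht

def exampleDomain (a : ℝ) : Set (ℂ × ℂ) :=
  {z | ‖z.1‖ < 1 ∧ ‖z.2‖ < 1 ∧ ‖z.2‖ ^ 2 - a ^ 2 < 2 * (1 - a ^ 2) * ‖z.1‖}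

namespace exampleDomain

variable {a : ℝ}

lemma isOpen (a : ℝ) : IsOpen (exampleDomain a) := by
  have hc1 : Continuous fun z : ℂ × ℂ => ‖z.1‖ := continuous_fst.norm
  have hc2 : Continuous fun z : ℂ × ℂ => ‖z.2‖ := continuous_snd.norm
  exact (isOpen_lt hc1 continuous_const).inter <| (isOpen_lt hc2 continuous_const).inter <|
    isOpen_lt ((hc2.pow 2).sub continuous_const) (continuous_const.mul hc1)

lemma zero_mem (ha : 0 < a) : ((0 : ℂ), (0 : ℂ)) ∈ exampleDomain a := by
  simp only [exampleDomain, mem_ofPred_eq, norm_zero]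
  exact ⟨one_pos, one_pos, by nlinarith⟩

lemma smul_mem (ha : 0 < a) {z : ℂ × ℂ} (hz : z ∈ exampleDomain a) {l : ℂ} (hl : ‖l‖ ≤ 1) :
    l • z ∈ exampleDomain a := by
  obtain ⟨h1, h2, h3⟩ := hz
  simp only [exampleDomain, mem_ofPred_eq, Prod.smul_fst, Prod.smul_snd, smul_eq_mul, norm_mul]
  exact ⟨(mul_le_of_le_one_left (norm_nonneg _) hl).trans_lt h1,
    (mul_le_of_le_one_left (norm_nonneg _) hl).trans_lt h2,
    sq_mul_sub_sq_lt_mul ha (norm_nonneg l) hl h3⟩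

lemma inv_smul_mem_iff (ha0 : 0 < a) (ha1 : a < 1) (d : ℂ) {t : ℝ} (ht : 0 < t) :
    t⁻¹ • ((0 : ℂ), d) ∈ exampleDomain a ↔ ‖d‖ / t < a := by
  have hnorm : ‖t⁻¹ • d‖ = ‖d‖ / t := by
    rw [norm_smul, Real.norm_eq_abs, abs_of_pos (inv_pos.2 ht), inv_mul_eq_div]
  have hpos : 0 ≤ ‖d‖ / t := div_nonneg (norm_nonneg d) ht.le
  simp only [exampleDomain, mem_ofPred_eq, Prod.smul_fst, Prod.smul_snd, smul_zero, norm_zero,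
    mul_zero, hnorm]
  constructor
  · rintro ⟨-, -, h⟩
    nlinarith
  · intro h
    exact ⟨one_pos, h.trans ha1, by nlinarith⟩

lemma mink_zero_left (ha0 : 0 < a) (ha1 : a < 1) (d : ℂ) :
    mink (exampleDomain a) ((0 : ℂ), d) = ‖d‖ / a := by
  have hset : {t : ℝ | 0 < t ∧ t⁻¹ • ((0 : ℂ), d) ∈ exampleDomain a}
      = {t : ℝ | 0 < t ∧ ‖d‖ / t < a} := by
    ext t
    exact and_congr_right (inv_smul_mem_iff ha0 ha1 d)
  rw [mink, hset, setOf_pos_and_div_lt_eq_Ioi (norm_nonneg d) ha0, csInf_Ioi]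

end exampleDomain

/-- Example 5: `D = {z ∈ 𝔻² : |z₂|² − a² < 2(1 − a²)|z₁|}` is a balanced domain (open,
contains `0`, and stable under multiplication by `λ` with `|λ| ≤ 1`), and
`h_D((0,d)) = |d|/a` for all `d ∈ ℂ`. -/
theorem stmt15 (a : ℝ) (ha0 : 0 < a) (ha1 : a < 1) (D : Set (ℂ × ℂ))
    (hD : D = {z : ℂ × ℂ | ‖z.1‖ < 1 ∧ ‖z.2‖ < 1 ∧
      (‖z.2‖) ^ 2 - a ^ 2 < 2 * (1 - a ^ 2) * ‖z.1‖}) :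
    IsOpen D ∧ ((0 : ℂ), (0 : ℂ)) ∈ D ∧
    (∀ z ∈ D, ∀ l : ℂ, ‖l‖ ≤ 1 → l • z ∈ D) ∧
    ∀ d : ℂ, mink D ((0 : ℂ), d) = ‖d‖ / a := by
  obtain rfl : D = exampleDomain a := hD
  exact ⟨exampleDomain.isOpen a, exampleDomain.zero_mem ha0,
    fun _ hz _ hl => exampleDomain.smul_mem ha0 hz hl, exampleDomain.mink_zero_left ha0 ha1⟩
end
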